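/- Any two 3-periodic billiard orbits of the same ellipse E have equal product of cosines of the angles of their Excentral Triangles: if (A,B,C) and (A′,B′,C′) are both 3-periodic billiard orbits of E, with excenters J_A = (−ℓ_A·A + ℓ_B·B + ℓ_C·C)/(−ℓ_A + ℓ_B + ℓ_C), J_B, J_C (cyclically) and J_{A′}, J_{B′}, J_{C′} respectively, then cos φ_A · cos φ_B · cos φ_C = cos φ_{A′} · cos φ_{B′} · cos φ_{C′}, where φ_A is the angle of the triangle J_A J_B J_C at J_A, i.e., cos φ_A = ((J_B − J_A)/‖J_B − J_A‖)·((J_C − J_A)/‖J_C − J_A‖), and similarly for the other angles. -/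

import Mathlib

open scoped RealInnerProductSpace

noncomputable section

abbrev Pt : Type := EuclideanSpace ℝ (Fin 2)

/-- f(x,y) = x²/a² + y²/b² -/
def fE (a b : ℝ) (p : Pt) : ℝ := (p 0) ^ 2 / a ^ 2 + (p 1) ^ 2 / b ^ 2

/-- ∇f(x,y) = (2x/a², 2y/b²) -/
def gradE (a b : ℝ) (p : Pt) : Pt :=
  (WithLp.equiv 2 (Fin 2 → ℝ)).symm ![2 * p 0 / a ^ 2, 2 * p 1 / b ^ 2]

/-- unit vector from `p` to `q` -/
def uvec (p q : Pt) : Pt := ‖q - p‖⁻¹ • (q - p)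

/-- An N-periodic billiard orbit in the ellipse with semiaxes a, b:
vertices on the ellipse, consecutive vertices distinct, and the elastic
reflection law `u_i = u_{i-1} - 2 (u_{i-1}·n_i) n_i` at each bounce. -/
def IsOrbit (a b : ℝ) {N : ℕ} (P : ZMod N → Pt) : Prop :=
  (∀ i, fE a b (P i) = 1) ∧ (∀ i, P (i + 1) ≠ P i) ∧
  ∀ i : ZMod N,
    uvec (P i) (P (i + 1)) =
      uvec (P (i - 1)) (P i) -
        (2 * ⟪uvec (P (i - 1)) (P i), ‖gradE a b (P i)‖⁻¹ • gradE a b (P i)⟫) •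
          (‖gradE a b (P i)‖⁻¹ • gradE a b (P i))

/-- Joachimsthal quantity (1/2)·(u_{i−1} · ∇f(P i)) at bounce i. -/
def joach (a b : ℝ) {N : ℕ} (P : ZMod N → Pt) (i : ZMod N) : ℝ :=
  (1 / 2) * ⟪uvec (P (i - 1)) (P i), gradE a b (P i)⟫

/-- planar cross product (determinant) -/
def cross (u v : Pt) : ℝ := u 0 * v 1 - u 1 * v 0

/-- Convex orbit: for each side, all other vertices lie strictly on one
and the same side of the line through P i and P (i+1). -/
def IsConvexOrbit (a b : ℝ) {N : ℕ} (P : ZMod N → Pt) : Prop :=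
  IsOrbit a b P ∧
  ∀ i : ZMod N,
    (∀ j, j ≠ i → j ≠ i + 1 → 0 < cross (P (i + 1) - P i) (P j - P i)) ∨
    (∀ j, j ≠ i → j ≠ i + 1 → cross (P (i + 1) - P i) (P j - P i) < 0)

/-- side length ℓ_A = ‖B − C‖ -/
def lA (P : ZMod 3 → Pt) : ℝ := ‖P 1 - P 2‖
/-- side length ℓ_B = ‖C − A‖ -/
def lB (P : ZMod 3 → Pt) : ℝ := ‖P 2 - P 0‖
/-- side length ℓ_C = ‖A − B‖ -/
def lC (P : ZMod 3 → Pt) : ℝ := ‖P 0 - P 1‖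
/-- semiperimeter -/
def sper (P : ZMod 3 → Pt) : ℝ := (lA P + lB P + lC P) / 2
/-- area Δ = |det(B − A, C − A)|/2 -/
def areaT (P : ZMod 3 → Pt) : ℝ := |cross (P 1 - P 0) (P 2 - P 0)| / 2
/-- inradius r = Δ/s -/
def inradius (P : ZMod 3 → Pt) : ℝ := areaT P / sper P
/-- circumradius R = ℓ_A ℓ_B ℓ_C/(4Δ) -/
def circumradius (P : ZMod 3 → Pt) : ℝ := lA P * lB P * lC P / (4 * areaT P)
/-- incenter I = (ℓ_A·A + ℓ_B·B + ℓ_C·C)/(2s) -/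
def incenterT (P : ZMod 3 → Pt) : Pt :=
  (2 * sper P)⁻¹ • (lA P • P 0 + lB P • P 1 + lC P • P 2)

/-- excenter J_A = (−ℓ_A·A + ℓ_B·B + ℓ_C·C)/(−ℓ_A + ℓ_B + ℓ_C) -/
def exA (P : ZMod 3 → Pt) : Pt :=
  (-lA P + lB P + lC P)⁻¹ • ((-lA P) • P 0 + lB P • P 1 + lC P • P 2)
/-- excenter J_B -/
def exB (P : ZMod 3 → Pt) : Pt :=
  (lA P - lB P + lC P)⁻¹ • (lA P • P 0 + (-lB P) • P 1 + lC P • P 2)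
/-- excenter J_C -/
def exC (P : ZMod 3 → Pt) : Pt :=
  (lA P + lB P - lC P)⁻¹ • (lA P • P 0 + lB P • P 1 + (-lC P) • P 2)


/-!
Joachimsthal's integral `J = ½ ⟪u_{i-1}, ∇f(P i)⟫` is constant along a billiard orbit. For a
3-periodic orbit every pair of vertices is a side, so every chord satisfies
`f(P j - P i) = 2 J ‖P j - P i‖`; in particular the triangle is nondegenerate. The excentral
triangle has angles `(π - A)/2, …`, so its cosine product is
`T = (-ℓ_A + ℓ_B + ℓ_C)(ℓ_A - ℓ_B + ℓ_C)(ℓ_A + ℓ_B - ℓ_C) / (8 ℓ_A ℓ_B ℓ_C)`.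

Writing the vertices as points `z = x/a + i y/b` of the unit circle, the chord relations become
`(z_j - z_i)² = J² (a² (z_i z_j - 1)² - b² (z_i z_j + 1)²)` and
`T = -(z₀ + z₁)(z₁ + z₂)(z₂ + z₀) / (8 z₀ z₁ z₂)`. Eliminating the `z_k` and `J` gives
`4 (a² - b²)² T² + 4 (a⁴ + b⁴) T = a² b²`, and the left side is strictly increasing in `T > 0`.
-/

lemma Pt.inner_eq (x y : Pt) : ⟪x, y⟫ = x 0 * y 0 + x 1 * y 1 := by
  simp [PiLp.inner_apply, Fin.sum_univ_two, mul_comm]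

lemma Pt.norm_sq_eq (x : Pt) : ‖x‖ ^ 2 = x 0 ^ 2 + x 1 ^ 2 := by
  simp [EuclideanSpace.real_norm_sq_eq, Fin.sum_univ_two]

section EllipseForm

variable {a b : ℝ}

@[simp]
lemma fE_zero : fE a b 0 = 0 := by simp [fE]

lemma fE_smul (c : ℝ) (v : Pt) : fE a b (c • v) = c ^ 2 * fE a b v := by
  simp only [fE, PiLp.smul_apply, smul_eq_mul]; ring

lemma fE_sub_comm (p q : Pt) : fE a b (p - q) = fE a b (q - p) := by
  simp only [fE, PiLp.sub_apply]; ring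

lemma fE_pos (ha : a ≠ 0) (hb : b ≠ 0) {v : Pt} (hv : v ≠ 0) : 0 < fE a b v := by
  have hv' : v 0 ≠ 0 ∨ v 1 ≠ 0 := by
    by_contra! h
    exact hv (by ext i; fin_cases i <;> simp [h.1, h.2])
  unfold fE
  rcases hv' with h | h <;> positivity

lemma inner_gradE (v p : Pt) :
    ⟪v, gradE a b p⟫ = 2 * (v 0 * p 0 / a ^ 2 + v 1 * p 1 / b ^ 2) := by
  simp only [Pt.inner_eq, gradE, WithLp.equiv_symm_apply, Matrix.cons_val_zero,
    Matrix.cons_val_one, Matrix.cons_val_fin_one]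
  ring

lemma inner_sub_gradE_right {p q : Pt} (hp : fE a b p = 1) (hq : fE a b q = 1) :
    ⟪q - p, gradE a b q⟫ = fE a b (q - p) := by
  rw [inner_gradE]; simp only [fE, PiLp.sub_apply] at *
  linear_combination hq - hp

lemma inner_sub_gradE_left {p q : Pt} (hp : fE a b p = 1) (hq : fE a b q = 1) :
    ⟪q - p, gradE a b p⟫ = -fE a b (q - p) := by
  rw [← fE_sub_comm p q, ← inner_sub_gradE_right hq hp, ← inner_neg_left, neg_sub]

end EllipseForm

lemma inner_reflect_normal {E : Type*} [NormedAddCommGroup E] [InnerProductSpace ℝ E] (u g : E) :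
    ⟪u - (2 * ⟪u, ‖g‖⁻¹ • g⟫) • (‖g‖⁻¹ • g), g⟫ = -⟪u, g⟫ := by
  rcases eq_or_ne g 0 with rfl | hg
  · simp
  have : ‖g‖ ≠ 0 := norm_ne_zero_iff.mpr hg
  simp only [inner_sub_left, real_inner_smul_left, real_inner_smul_right,
    real_inner_self_eq_norm_sq]
  field_simp
  ring

lemma ZMod.eq_or_eq_add_one_or_eq_add_one (i j : ZMod 3) : j = i ∨ j = i + 1 ∨ i = j + 1 := by
  revert i j; decide

section Orbit

variable {a b : ℝ} {N : ℕ} {P : ZMod N → Pt}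

lemma joach_add_one_eq {i : ZMod N} (hi : fE a b (P i) = 1) (hi' : fE a b (P (i + 1)) = 1) :
    joach a b P (i + 1) = fE a b (P (i + 1) - P i) / (2 * ‖P (i + 1) - P i‖) := by
  unfold joach uvec
  rw [add_sub_cancel_right, real_inner_smul_left, inner_sub_gradE_right hi hi']
  ring

lemma IsOrbit.joach_eq (hP : IsOrbit a b P) (i : ZMod N) :
    joach a b P i = fE a b (P (i + 1) - P i) / (2 * ‖P (i + 1) - P i‖) := by
  have h := congrArg (⟪·, gradE a b (P i)⟫) (hP.2.2 i)
  simp only [inner_reflect_normal] at h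
  unfold joach
  rw [← neg_neg ⟪uvec (P (i - 1)) (P i), _⟫, ← h, uvec, real_inner_smul_left,
    inner_sub_gradE_left (hP.1 i) (hP.1 (i + 1))]
  ring

lemma IsOrbit.joach_add_one (hP : IsOrbit a b P) (i : ZMod N) :
    joach a b P (i + 1) = joach a b P i :=
  (joach_add_one_eq (hP.1 i) (hP.1 (i + 1))).trans (hP.joach_eq i).symm

lemma IsOrbit.joach_eq_joach_zero (hP : IsOrbit a b P) (i : ZMod N) :
    joach a b P i = joach a b P 0 := by
  obtain ⟨n, rfl⟩ := ZMod.intCast_surjective i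
  induction n using Int.induction_on with
  | zero => simp
  | succ k ih =>
    push_cast at ih ⊢
    rw [hP.joach_add_one, ih]
  | pred k ih =>
    rw [← hP.joach_add_one, ← ih]
    congr 1
    push_cast
    ring

lemma IsOrbit.fE_sub_add_one (hP : IsOrbit a b P) (i : ZMod N) :
    fE a b (P (i + 1) - P i) = 2 * joach a b P i * ‖P (i + 1) - P i‖ := by
  have : ‖P (i + 1) - P i‖ ≠ 0 := norm_ne_zero_iff.2 (sub_ne_zero.2 (hP.2.1 i))
  rw [hP.joach_eq]
  field_simp

lemma IsOrbit.joach_pos (ha : a ≠ 0) (hb : b ≠ 0) (hP : IsOrbit a b P) (i : ZMod N) :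
    0 < joach a b P i := by
  have hd : P (i + 1) - P i ≠ 0 := sub_ne_zero.2 (hP.2.1 i)
  rw [hP.joach_eq]
  exact div_pos (fE_pos ha hb hd) (mul_pos two_pos (norm_pos_iff.2 hd))

end Orbit

lemma eq_one_of_fE_smul_eq {a b c r : ℝ} {x : Pt} (hx : c * ‖x‖ ≠ 0) (hr : 0 < r)
    (hfx : fE a b x = c * ‖x‖) (hfrx : fE a b (r • x) = c * ‖r • x‖) : r = 1 := by
  rw [fE_smul, norm_smul, Real.norm_of_nonneg hr.le, hfx] at hfrx
  have : r * (r - 1) * (c * ‖x‖) = 0 := by linear_combination hfrx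
  simpa [hr.ne', hx, sub_eq_zero] using this

/-- `fE` is homogeneous of degree 2 and the norm of degree 1, so on each open ray `fE v = c ‖v‖`
has at most one solution; equality in the triangle inequality would put `x`, `y` and `x + y` on
one ray. -/
lemma norm_add_lt_of_fE_eq {a b c : ℝ} (hc : c ≠ 0) {x y : Pt} (hx : x ≠ 0) (hy : y ≠ 0)
    (hfx : fE a b x = c * ‖x‖) (hfy : fE a b y = c * ‖y‖)
    (hfxy : fE a b (x + y) = c * ‖x + y‖) : ‖x + y‖ < ‖x‖ + ‖y‖ := by
  refine (norm_add_le x y).lt_of_ne fun h => ?_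
  obtain ⟨r, hr, rfl⟩ := (sameRay_iff_norm_add.2 h).exists_pos_left hx hy
  have hcx : c * ‖x‖ ≠ 0 := mul_ne_zero hc (norm_ne_zero_iff.2 hx)
  have h1 : r = 1 := eq_one_of_fE_smul_eq hcx hr hfx hfy
  have h2 : 1 + r = 1 :=
    eq_one_of_fE_smul_eq hcx (by positivity) hfx (by rwa [add_smul, one_smul])
  linarith

section Triangle

variable {a b : ℝ} {P : ZMod 3 → Pt}

lemma IsOrbit.injective (hP : IsOrbit a b P) : Function.Injective P := by
  intro i j h
  obtain rfl | rfl | rfl := ZMod.eq_or_eq_add_one_or_eq_add_one i j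
  · rfl
  · exact absurd h.symm (hP.2.1 i)
  · exact absurd h (hP.2.1 j)

lemma IsOrbit.fE_sub_eq (hP : IsOrbit a b P) (i j : ZMod 3) :
    fE a b (P j - P i) = 2 * joach a b P 0 * ‖P j - P i‖ := by
  have hside (k : ZMod 3) := hP.joach_eq_joach_zero k ▸ hP.fE_sub_add_one k
  obtain rfl | rfl | rfl := ZMod.eq_or_eq_add_one_or_eq_add_one i j
  · simp
  · exact hside i
  · rw [fE_sub_comm, norm_sub_rev, hside j]

lemma IsOrbit.norm_sub_lt (ha : a ≠ 0) (hb : b ≠ 0) (hP : IsOrbit a b P) {i j k : ZMod 3}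
    (hij : i ≠ j) (hjk : j ≠ k) : ‖P i - P k‖ < ‖P i - P j‖ + ‖P j - P k‖ := by
  have h := norm_add_lt_of_fE_eq (mul_pos two_pos (hP.joach_pos ha hb 0)).ne'
    (sub_ne_zero.2 (hP.injective.ne hij)) (sub_ne_zero.2 (hP.injective.ne hjk))
    (hP.fE_sub_eq j i) (hP.fE_sub_eq k j) (by rw [sub_add_sub_cancel]; exact hP.fE_sub_eq k i)
  rwa [sub_add_sub_cancel] at h

end Triangle

def cosProduct (X Y Z : Pt) : ℝ :=
  ⟪uvec X Y, uvec X Z⟫ * ⟪uvec Y Z, uvec Y X⟫ * ⟪uvec Z X, uvec Z Y⟫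

lemma inner_uvec_uvec (X Y Z : Pt) :
    ⟪uvec X Y, uvec X Z⟫ =
      (‖Y - X‖ ^ 2 + ‖Z - X‖ ^ 2 - ‖Z - Y‖ ^ 2) / 2 * (‖Y - X‖ * ‖Z - X‖)⁻¹ := by
  have h := norm_sub_sq_real (Y - X) (Z - X)
  rw [sub_sub_sub_cancel_right, norm_sub_rev] at h
  rw [uvec, uvec, real_inner_smul_left, real_inner_smul_right]
  linear_combination ((‖Y - X‖ * ‖Z - X‖)⁻¹ / 2) * h

lemma cosProduct_eq_norm_sq (X Y Z : Pt) :
    cosProduct X Y Z =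
      (‖Y - X‖ ^ 2 + ‖X - Z‖ ^ 2 - ‖Z - Y‖ ^ 2) * (‖Z - Y‖ ^ 2 + ‖Y - X‖ ^ 2 - ‖X - Z‖ ^ 2) *
        (‖X - Z‖ ^ 2 + ‖Z - Y‖ ^ 2 - ‖Y - X‖ ^ 2) /
        (8 * ‖Y - X‖ ^ 2 * ‖Z - Y‖ ^ 2 * ‖X - Z‖ ^ 2) := by
  rw [cosProduct, inner_uvec_uvec, inner_uvec_uvec, inner_uvec_uvec, norm_sub_rev Z X,
    norm_sub_rev X Y, norm_sub_rev Y Z]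
  ring

def excenter (A B C : Pt) : Pt :=
  (-‖B - C‖ + ‖C - A‖ + ‖A - B‖)⁻¹ • ((-‖B - C‖) • A + ‖C - A‖ • B + ‖A - B‖ • C)

lemma norm_excenter_sub_excenter_sq {A B C : Pt} (hA : -‖B - C‖ + ‖C - A‖ + ‖A - B‖ ≠ 0)
    (hB : ‖B - C‖ - ‖C - A‖ + ‖A - B‖ ≠ 0) :
    ‖excenter B C A - excenter A B C‖ ^ 2 =
      4 * ‖B - C‖ * ‖C - A‖ * ‖A - B‖ ^ 2 /
        ((-‖B - C‖ + ‖C - A‖ + ‖A - B‖) * (‖B - C‖ - ‖C - A‖ + ‖A - B‖)) := by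
  have hinner := norm_sub_sq_real (A - C) (B - C)
  rw [sub_sub_sub_cancel_right, norm_sub_rev A C] at hinner
  unfold excenter
  set la := ‖B - C‖
  set lb := ‖C - A‖
  set lc := ‖A - B‖
  have hdiff : (-lb + lc + la)⁻¹ • ((-lb) • B + lc • C + la • A) -
      (-la + lb + lc)⁻¹ • ((-la) • A + lb • B + lc • C) =
      (2 * lc / ((-la + lb + lc) * (la - lb + lc))) • (la • (A - C) - lb • (B - C)) := by
    have hB' : -lb + lc + la ≠ 0 := by convert hB using 1; ring
    match_scalars <;> field_simp <;> ring
  rw [hdiff, norm_smul, mul_pow, norm_sub_sq_real]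
  simp only [norm_smul, real_inner_smul_left, real_inner_smul_right, Real.norm_eq_abs, mul_pow,
    sq_abs]
  rw [norm_sub_rev A C, show ⟪A - C, B - C⟫ = (lb ^ 2 + la ^ 2 - lc ^ 2) / 2 by linarith]
  field_simp
  ring

lemma cosProduct_excenter {A B C : Pt} (hA : 0 < -‖B - C‖ + ‖C - A‖ + ‖A - B‖)
    (hB : 0 < ‖B - C‖ - ‖C - A‖ + ‖A - B‖) (hC : 0 < ‖B - C‖ + ‖C - A‖ - ‖A - B‖) :
    cosProduct (excenter A B C) (excenter B C A) (excenter C A B) =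
      (-‖B - C‖ + ‖C - A‖ + ‖A - B‖) * (‖B - C‖ - ‖C - A‖ + ‖A - B‖) *
        (‖B - C‖ + ‖C - A‖ - ‖A - B‖) / (8 * ‖B - C‖ * ‖C - A‖ * ‖A - B‖) := by
  have hAB := norm_excenter_sub_excenter_sq (A := A) (B := B) (C := C) (by linarith) (by linarith)
  have hBC := norm_excenter_sub_excenter_sq (A := B) (B := C) (C := A) (by linarith) (by linarith)
  have hCA := norm_excenter_sub_excenter_sq (A := C) (B := A) (C := B) (by linarith) (by linarith)
  rw [cosProduct_eq_norm_sq, hAB, hBC, hCA]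
  set la := ‖B - C‖
  set lb := ‖C - A‖
  set lc := ‖A - B‖
  rw [show -lb + lc + la = la - lb + lc by ring, show lb - lc + la = la + lb - lc by ring,
    show -lc + la + lb = la + lb - lc by ring, show lc - la + lb = -la + lb + lc by ring]
  have : 0 < la := by linarith
  have : 0 < lb := by linarith
  have : 0 < lc := by linarith
  field_simp
  ring

lemma exA_eq_excenter (P : ZMod 3 → Pt) : exA P = excenter (P 0) (P 1) (P 2) := rfl

lemma exB_eq_excenter (P : ZMod 3 → Pt) : exB P = excenter (P 1) (P 2) (P 0) := by
  unfold exB excenter lA lB lC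
  congr 1
  · ring
  · abel

lemma exC_eq_excenter (P : ZMod 3 → Pt) : exC P = excenter (P 2) (P 0) (P 1) := by
  unfold exC excenter lA lB lC
  congr 1
  · ring
  · abel

open Complex ComplexConjugate

lemma Complex.conj_sub_of_normSq_eq_one {z w : ℂ} (hz : normSq z = 1) (hw : normSq w = 1) :
    conj (w - z) = -(w - z) / (z * w) := by
  have hz0 : z ≠ 0 := fun h => by simp [h] at hz
  have hw0 : w ≠ 0 := fun h => by simp [h] at hw
  have hcz : conj z = z⁻¹ := by rw [inv_def, hz]; simp
  have hcw : conj w = w⁻¹ := by rw [inv_def, hw]; simp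
  rw [map_sub, hcz, hcw]
  field_simp
  ring

def circleCoord (a b : ℝ) (p : Pt) : ℂ := ⟨p 0 / a, p 1 / b⟩

section CircleCoord

variable {a b : ℝ}

lemma circleCoord_sub (p q : Pt) :
    circleCoord a b (q - p) = circleCoord a b q - circleCoord a b p := by
  apply Complex.ext <;> simp [circleCoord, sub_div]

lemma normSq_circleCoord (v : Pt) : normSq (circleCoord a b v) = fE a b v := by
  simp only [normSq_apply, circleCoord, fE]
  ring

lemma norm_sq_eq_circleCoord (ha : a ≠ 0) (hb : b ≠ 0) (v : Pt) :
    ‖v‖ ^ 2 = a ^ 2 * (circleCoord a b v).re ^ 2 + b ^ 2 * (circleCoord a b v).im ^ 2 := by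
  simp only [Pt.norm_sq_eq, circleCoord]
  field_simp

lemma circleCoord_ne_zero {p : Pt} (hp : fE a b p = 1) : circleCoord a b p ≠ 0 := by
  rw [← normSq_circleCoord] at hp
  exact fun h => by simp [h] at hp

lemma circleCoord_sub_ne_zero (ha : a ≠ 0) (hb : b ≠ 0) {p q : Pt} (hpq : p ≠ q) :
    circleCoord a b q - circleCoord a b p ≠ 0 := by
  rw [← circleCoord_sub, ← normSq_pos, normSq_circleCoord]
  exact fE_pos ha hb (sub_ne_zero.2 hpq.symm)

lemma fE_sub_mul_circleCoord {p q : Pt} (hp : fE a b p = 1) (hq : fE a b q = 1) :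
    (fE a b (q - p) : ℂ) * (circleCoord a b p * circleCoord a b q) =
      -(circleCoord a b q - circleCoord a b p) ^ 2 := by
  have hp0 := circleCoord_ne_zero hp
  have hq0 := circleCoord_ne_zero hq
  rw [← normSq_circleCoord] at hp hq
  rw [← normSq_circleCoord, circleCoord_sub, ← mul_conj, conj_sub_of_normSq_eq_one hp hq]
  field_simp

lemma norm_sub_sq_mul_circleCoord (ha : a ≠ 0) (hb : b ≠ 0) {p q : Pt} (hp : fE a b p = 1)
    (hq : fE a b q = 1) :
    ((‖q - p‖ ^ 2 : ℝ) : ℂ) * (4 * (circleCoord a b p * circleCoord a b q) ^ 2) =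
      (circleCoord a b q - circleCoord a b p) ^ 2 *
        (a ^ 2 * (circleCoord a b p * circleCoord a b q - 1) ^ 2 -
          b ^ 2 * (circleCoord a b p * circleCoord a b q + 1) ^ 2) := by
  have hp0 := circleCoord_ne_zero hp
  have hq0 := circleCoord_ne_zero hq
  rw [← normSq_circleCoord] at hp hq
  rw [norm_sq_eq_circleCoord ha hb, circleCoord_sub]
  have him (z : ℂ) : (z.im : ℂ) ^ 2 = -(z - conj z) ^ 2 / 4 := by
    rw [im_eq_sub_conj, div_pow, mul_pow, I_sq]
    ring
  push_cast
  rw [re_eq_add_conj, him, conj_sub_of_normSq_eq_one hp hq]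
  field_simp
  ring

end CircleCoord

lemma sq_sub_circleCoord_eq {a b J : ℝ} (ha : a ≠ 0) (hb : b ≠ 0) {p q : Pt}
    (hp : fE a b p = 1) (hq : fE a b q = 1) (hpq : p ≠ q)
    (hJ : fE a b (q - p) = 2 * J * ‖q - p‖) :
    (circleCoord a b q - circleCoord a b p) ^ 2 =
      (J : ℂ) ^ 2 * (a ^ 2 * (circleCoord a b p * circleCoord a b q - 1) ^ 2 -
        b ^ 2 * (circleCoord a b p * circleCoord a b q + 1) ^ 2) := by
  have hF := fE_sub_mul_circleCoord hp hq
  have hL := norm_sub_sq_mul_circleCoord ha hb hp hq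
  have hsq : ((fE a b (q - p) : ℝ) : ℂ) ^ 2 = 4 * (J : ℂ) ^ 2 * ((‖q - p‖ ^ 2 : ℝ) : ℂ) := by
    rw [hJ]; push_cast; ring
  set s := circleCoord a b p * circleCoord a b q
  set d := circleCoord a b q - circleCoord a b p
  have hd : d ^ 2 ≠ 0 := pow_ne_zero 2 (circleCoord_sub_ne_zero ha hb hpq)
  refine mul_left_cancel₀ hd (sub_eq_zero.1 ?_)
  linear_combination (d ^ 2 - (fE a b (q - p) : ℂ) * s) * hF + s ^ 2 * hsq + (J : ℂ) ^ 2 * hL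

lemma eq_zero_of_quadratic_of_three_roots {K : Type*} [Field K] {p q r x y z : K}
    (hxy : x ≠ y) (hyz : y ≠ z) (hxz : x ≠ z) (hx : p * x ^ 2 + q * x + r = 0)
    (hy : p * y ^ 2 + q * y + r = 0) (hz : p * z ^ 2 + q * z + r = 0) :
    p = 0 ∧ q = 0 ∧ r = 0 := by
  have hxy' : p * (x + y) + q = 0 :=
    (mul_eq_zero.1 (by linear_combination hx - hy : (x - y) * (p * (x + y) + q) = 0)).resolve_left
      (sub_ne_zero.2 hxy)
  have hyz' : p * (y + z) + q = 0 :=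
    (mul_eq_zero.1 (by linear_combination hy - hz : (y - z) * (p * (y + z) + q) = 0)).resolve_left
      (sub_ne_zero.2 hyz)
  have hp : p = 0 :=
    (mul_eq_zero.1 (by linear_combination hxy' - hyz' : (x - z) * p = 0)).resolve_left
      (sub_ne_zero.2 hxz)
  have hq : q = 0 := by linear_combination hxy' - (x + y) * hp
  exact ⟨hp, hq, by linear_combination hx - x ^ 2 * hp - x * hq⟩

lemma strictMonoOn_quadratic {α β : ℝ} (hα : 0 ≤ α) (hβ : 0 < β) :
    StrictMonoOn (fun x => α * x ^ 2 + β * x) (Set.Ici 0) := by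
  intro x hx y _ hxy
  have : α * x ^ 2 ≤ α * y ^ 2 := by gcongr
  simp only
  nlinarith

/-- The quadratic `p X² + q X + r` below is symmetric in `z₀, z₁, z₂`, and the chord equation of
the side opposite `zₖ`, multiplied by `zₖ²`, says that `zₖ` is one of its roots. -/
lemma chord_equations_relation {K : Type*} [Field K] {α β μ z₀ z₁ z₂ : K}
    (h₀₁ : z₀ ≠ z₁) (h₁₂ : z₁ ≠ z₂) (h₀₂ : z₀ ≠ z₂) (he : z₀ * z₁ * z₂ ≠ 0)
    (hA : (z₂ - z₁) ^ 2 = μ * (α * (z₁ * z₂ - 1) ^ 2 - β * (z₁ * z₂ + 1) ^ 2))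
    (hB : (z₀ - z₂) ^ 2 = μ * (α * (z₂ * z₀ - 1) ^ 2 - β * (z₂ * z₀ + 1) ^ 2))
    (hC : (z₁ - z₀) ^ 2 = μ * (α * (z₀ * z₁ - 1) ^ 2 - β * (z₀ * z₁ + 1) ^ 2)) :
    (α - β) ^ 2 * ((z₀ + z₁) * (z₁ + z₂) * (z₂ + z₀)) ^ 2
      - 8 * (α ^ 2 + β ^ 2) * ((z₀ + z₁) * (z₁ + z₂) * (z₂ + z₀)) * (z₀ * z₁ * z₂)
      - 16 * α * β * (z₀ * z₁ * z₂) ^ 2 = 0 := by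
  set e₁ := z₀ + z₁ + z₂
  set e₂ := z₀ * z₁ + z₁ * z₂ + z₂ * z₀
  set e₃ := z₀ * z₁ * z₂
  obtain ⟨hp, hq, hr⟩ := eq_zero_of_quadratic_of_three_roots (p := -μ * (α - β) - e₂)
    (q := 2 * μ * (α + β) * e₃ - 3 * e₃ + e₁ * e₂) (r := -μ * (α - β) * e₃ ^ 2 - e₁ * e₃)
    h₀₁ h₁₂ h₀₂ (by linear_combination z₀ ^ 2 * hA) (by linear_combination z₁ ^ 2 * hB)
    (by linear_combination z₂ ^ 2 * hC)
  have he₁ : e₁ = -μ * (α - β) * e₃ := mul_left_cancel₀ he (by linear_combination -hr)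
  have he₂ : e₂ = -μ * (α - β) := by linear_combination -hp
  have hμ : μ ^ 2 * (α - β) ^ 2 = 3 - 2 * μ * (α + β) :=
    mul_left_cancel₀ he (by linear_combination hq - e₂ * he₁ - (-μ * (α - β) * e₃) * he₂)
  have hS : (z₀ + z₁) * (z₁ + z₂) * (z₂ + z₀) = (2 - 2 * μ * (α + β)) * e₃ := by
    linear_combination e₂ * he₁ + (-μ * (α - β) * e₃) * he₂ + e₃ * hμ
  linear_combination ((α - β) ^ 2 * ((z₀ + z₁) * (z₁ + z₂) * (z₂ + z₀)
      + (2 - 2 * μ * (α + β)) * e₃) - 8 * (α ^ 2 + β ^ 2) * e₃) * hS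
    + 4 * (α + β) ^ 2 * e₃ ^ 2 * hμ

lemma sides_product_mul_eq {K : Type*} [Field K] {k la lb lc z₀ z₁ z₂ : K} (hk : k ≠ 0)
    (he : z₀ * z₁ * z₂ ≠ 0) (hA : k * la * (z₁ * z₂) = -(z₂ - z₁) ^ 2)
    (hB : k * lb * (z₂ * z₀) = -(z₀ - z₂) ^ 2) (hC : k * lc * (z₀ * z₁) = -(z₁ - z₀) ^ 2) :
    (-la + lb + lc) * (la - lb + lc) * (la + lb - lc) * (z₀ * z₁ * z₂) =
      -((z₀ + z₁) * (z₁ + z₂) * (z₂ + z₀)) * (la * lb * lc) := by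
  set e₃ := z₀ * z₁ * z₂
  have hFA : k * (-la + lb + lc) * e₃ = (z₁ + z₂) * (z₂ - z₀) * (z₀ - z₁) := by
    linear_combination (-z₀) * hA + z₁ * hB + z₂ * hC
  have hFB : k * (la - lb + lc) * e₃ = (z₂ + z₀) * (z₀ - z₁) * (z₁ - z₂) := by
    linear_combination z₀ * hA - z₁ * hB + z₂ * hC
  have hFC : k * (la + lb - lc) * e₃ = (z₀ + z₁) * (z₁ - z₂) * (z₂ - z₀) := by
    linear_combination z₀ * hA + z₁ * hB - z₂ * hC
  have h : k ^ 3 * e₃ ^ 2 * ((-la + lb + lc) * (la - lb + lc) * (la + lb - lc) * e₃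
      + (z₀ + z₁) * (z₁ + z₂) * (z₂ + z₀) * (la * lb * lc)) = 0 := by
    linear_combination (k * (la - lb + lc) * e₃) * (k * (la + lb - lc) * e₃) * hFA
      + (z₁ + z₂) * (z₂ - z₀) * (z₀ - z₁) * (k * (la + lb - lc) * e₃) * hFB
      + (z₁ + z₂) * (z₂ - z₀) * (z₀ - z₁) * ((z₂ + z₀) * (z₀ - z₁) * (z₁ - z₂)) * hFC
      + (z₀ + z₁) * (z₁ + z₂) * (z₂ + z₀) * ((k * lb * (z₂ * z₀)) * (k * lc * (z₀ * z₁)) * hA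
        + (-(z₂ - z₁) ^ 2) * (k * lc * (z₀ * z₁)) * hB + (z₂ - z₁) ^ 2 * (z₀ - z₂) ^ 2 * hC)
  have hne : k ^ 3 * e₃ ^ 2 ≠ 0 := by positivity
  linear_combination (mul_eq_zero.1 h).resolve_left hne

section ThreeOrbit

variable {a b : ℝ} {P : ZMod 3 → Pt}

lemma IsOrbit.triangle_ineq_strict (ha : a ≠ 0) (hb : b ≠ 0) (hP : IsOrbit a b P) :
    0 < -lA P + lB P + lC P ∧ 0 < lA P - lB P + lC P ∧ 0 < lA P + lB P - lC P := by
  have hA := hP.norm_sub_lt ha hb (i := 1) (j := 0) (k := 2) (by decide) (by decide)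
  have hB := hP.norm_sub_lt ha hb (i := 2) (j := 1) (k := 0) (by decide) (by decide)
  have hC := hP.norm_sub_lt ha hb (i := 0) (j := 2) (k := 1) (by decide) (by decide)
  simp only [norm_sub_rev (P 1) (P 0), norm_sub_rev (P 0) (P 2), norm_sub_rev (P 2) (P 1)]
    at hA hB hC
  unfold lA lB lC
  exact ⟨by linarith, by linarith, by linarith⟩

lemma IsOrbit.cosProduct_eq (ha : a ≠ 0) (hb : b ≠ 0) (hP : IsOrbit a b P) :
    cosProduct (exA P) (exB P) (exC P) =
      (-lA P + lB P + lC P) * (lA P - lB P + lC P) * (lA P + lB P - lC P) /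
        (8 * lA P * lB P * lC P) := by
  obtain ⟨hA, hB, hC⟩ := hP.triangle_ineq_strict ha hb
  rw [exA_eq_excenter, exB_eq_excenter, exC_eq_excenter]
  exact cosProduct_excenter hA hB hC

lemma IsOrbit.sides_relation (ha : a ≠ 0) (hb : b ≠ 0) (hP : IsOrbit a b P) :
    (a ^ 2 - b ^ 2) ^ 2 * ((-lA P + lB P + lC P) * (lA P - lB P + lC P) * (lA P + lB P - lC P)) ^ 2
      + 8 * (a ^ 4 + b ^ 4) * ((-lA P + lB P + lC P) * (lA P - lB P + lC P) *
        (lA P + lB P - lC P)) * (lA P * lB P * lC P)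
      - 16 * a ^ 2 * b ^ 2 * (lA P * lB P * lC P) ^ 2 = 0 := by
  set J := joach a b P 0
  set z : ZMod 3 → ℂ := fun i => circleCoord a b (P i)
  have hne (i j : ZMod 3) (hij : i ≠ j) : z i ≠ z j := fun h =>
    circleCoord_sub_ne_zero ha hb (hP.injective.ne hij) (sub_eq_zero.2 h.symm)
  have hchord (i j : ZMod 3) (hij : i ≠ j) :
      (z j - z i) ^ 2 = (J : ℂ) ^ 2 * ((a : ℂ) ^ 2 * (z i * z j - 1) ^ 2 -
        (b : ℂ) ^ 2 * (z i * z j + 1) ^ 2) :=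
    sq_sub_circleCoord_eq ha hb (hP.1 i) (hP.1 j) (hP.injective.ne hij) (hP.fE_sub_eq i j)
  have hside (i j : ZMod 3) : 2 * (J : ℂ) * (‖P i - P j‖ : ℂ) * (z i * z j) = -(z j - z i) ^ 2 := by
    rw [← fE_sub_mul_circleCoord (hP.1 i) (hP.1 j), hP.fE_sub_eq, norm_sub_rev]
    push_cast
    ring
  have he : z 0 * z 1 * z 2 ≠ 0 := by simp [z, circleCoord_ne_zero, hP.1]
  have hrel := chord_equations_relation (hne 0 1 (by decide)) (hne 1 2 (by decide))
    (hne 0 2 (by decide)) he (hchord 1 2 (by decide)) (hchord 2 0 (by decide))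
    (hchord 0 1 (by decide))
  have hJ : 2 * (J : ℂ) ≠ 0 := by exact_mod_cast (mul_pos two_pos (hP.joach_pos ha hb 0)).ne'
  have hsides := sides_product_mul_eq hJ he (hside 1 2) (hside 2 0) (hside 0 1)
  refine Complex.ofReal_injective ((mul_left_inj' (pow_ne_zero 2 he)).1 ?_)
  unfold lA lB lC
  push_cast
  set la := (‖P 1 - P 2‖ : ℂ)
  set lb := (‖P 2 - P 0‖ : ℂ)
  set lc := (‖P 0 - P 1‖ : ℂ)
  set S := (z 0 + z 1) * (z 1 + z 2) * (z 2 + z 0)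
  set e₃ := z 0 * z 1 * z 2
  linear_combination (la * lb * lc) ^ 2 * hrel + (((a : ℂ) ^ 2 - (b : ℂ) ^ 2) ^ 2 *
    ((-la + lb + lc) * (la - lb + lc) * (la + lb - lc) * e₃ - S * (la * lb * lc))
    + 8 * ((a : ℂ) ^ 4 + (b : ℂ) ^ 4) * (la * lb * lc) * e₃) * hsides

lemma IsOrbit.cosProduct_pos (ha : a ≠ 0) (hb : b ≠ 0) (hP : IsOrbit a b P) :
    0 < cosProduct (exA P) (exB P) (exC P) := by
  obtain ⟨hA, hB, hC⟩ := hP.triangle_ineq_strict ha hb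
  rw [hP.cosProduct_eq ha hb]
  have : 0 < 8 * lA P * lB P * lC P := by
    refine mul_pos (mul_pos (mul_pos ?_ ?_) ?_) ?_ <;> linarith
  positivity

lemma IsOrbit.cosProduct_quadratic (ha : a ≠ 0) (hb : b ≠ 0) (hP : IsOrbit a b P) :
    4 * (a ^ 2 - b ^ 2) ^ 2 * cosProduct (exA P) (exB P) (exC P) ^ 2 +
      4 * (a ^ 4 + b ^ 4) * cosProduct (exA P) (exB P) (exC P) = a ^ 2 * b ^ 2 := by
  obtain ⟨hA, hB, hC⟩ := hP.triangle_ineq_strict ha hb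
  have : lA P ≠ 0 := by linarith
  have : lB P ≠ 0 := by linarith
  have : lC P ≠ 0 := by linarith
  rw [hP.cosProduct_eq ha hb]
  field_simp
  linear_combination 4 * hP.sides_relation ha hb

end ThreeOrbit

/-- any two 3-periodic orbits of the same ellipse have equal product of
cosines of the angles of their excentral triangles. -/
theorem product_of_excentral_cosines_invariant (a b : ℝ) (hb : 0 < b) (hab : b ≤ a)
    (P P' : ZMod 3 → Pt) (hP : IsOrbit a b P) (hP' : IsOrbit a b P') :
    ⟪uvec (exA P) (exB P), uvec (exA P) (exC P)⟫ *
      ⟪uvec (exB P) (exC P), uvec (exB P) (exA P)⟫ *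
      ⟪uvec (exC P) (exA P), uvec (exC P) (exB P)⟫ =
    ⟪uvec (exA P') (exB P'), uvec (exA P') (exC P')⟫ *
      ⟪uvec (exB P') (exC P'), uvec (exB P') (exA P')⟫ *
      ⟪uvec (exC P') (exA P'), uvec (exC P') (exB P')⟫ := by
  have ha : a ≠ 0 := (hb.trans_le hab).ne'
  have hmono := strictMonoOn_quadratic (α := 4 * (a ^ 2 - b ^ 2) ^ 2) (β := 4 * (a ^ 4 + b ^ 4))
    (by positivity) (by positivity)
  exact hmono.injOn (hP.cosProduct_pos ha hb.ne').le (hP'.cosProduct_pos ha hb.ne').le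
    ((hP.cosProduct_quadratic ha hb.ne').trans (hP'.cosProduct_quadratic ha hb.ne').symm)
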